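/- arXiv:1711.10208 — 4 statements merged into one kernel-verified Lean document; each statement's English description precedes it below -/
import Mathlib

section
/- Let G be a group, σ : G → G a group endomorphism, and define the Lang map L(g) = g⁻¹ · σ(g). Suppose L is surjective. Let X, X' ⊆ G be arbitrary subsets, and let S = {(x, x', y) ∈ X × X' × G : x · σ(y) = y · x'}. Then the map ι : L⁻¹(X) × L⁻¹(X') → S given by (g, g') ↦ (L(g), L(g'), g⁻¹g') is surjective. -/
theorem MonoidHom.mul_inv_mul_map_mul {G : Type*} [Group G] (σ : G →* G) (g y : G) :
    (g * y)⁻¹ * σ (g * y) = y⁻¹ * (g⁻¹ * σ g) * σ y := by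
  simp only [map_mul]
  group

theorem MonoidHom.mul_inv_mul_map_mul_eq_of_mul_map_eq {G : Type*} [Group G] (σ : G →* G)
    {g x x' y : G} (hg : g⁻¹ * σ g = x) (hxy : x * σ y = y * x') :
    (g * y)⁻¹ * σ (g * y) = x' := by
  rw [σ.mul_inv_mul_map_mul, hg, mul_assoc, hxy, inv_mul_cancel_left]

/-- Surjectivity of the map `(g, g') ↦ (L(g), L(g'), g⁻¹g')` from
`L⁻¹(X) × L⁻¹(X')` onto `S = {(x, x', y) : x·σ(y) = y·x'}`, where
`L(g) = g⁻¹·σ(g)` is the Lang map, assumed surjective. -/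
theorem stmt0 {G : Type*} [Group G] (σ : G →* G)
    (hL : Function.Surjective (fun g : G => g⁻¹ * σ g))
    (X X' : Set G) :
    ∀ x x' y : G, x ∈ X → x' ∈ X' → x * σ y = y * x' →
      ∃ g g' : G, g⁻¹ * σ g ∈ X ∧ g'⁻¹ * σ g' ∈ X' ∧
        g⁻¹ * σ g = x ∧ g'⁻¹ * σ g' = x' ∧ g⁻¹ * g' = y := by
  intro x x' y hx hx' hxy
  obtain ⟨g, hg⟩ : ∃ g, g⁻¹ * σ g = x := hL x
  have hg' : (g * y)⁻¹ * σ (g * y) = x' := σ.mul_inv_mul_map_mul_eq_of_mul_map_eq hg hxy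
  exact ⟨g, g * y, hg ▸ hx, hg' ▸ hx', hg, hg', inv_mul_cancel_left g y⟩
end

section
/- Let O be a discrete valuation ring with uniformizer π, r ≥ 2, R = O/(π^r), and let i ∈ {0, …, r−2}. Fix y ∈ R lying in π^i R but not in π^(i+1) R. Then the map x ↦ 1 + x·y is a surjective group homomorphism from the additive group π^(r−i−1)R onto the multiplicative group 1 + π^(r−1)R. -/
/-!
Write `p` for the image of `π` in `R = O/(π^r)`, so `p^r = 0`. Since `y ∈ p^i R`, every product
`x * y` with `x ∈ p^(r-i-1) R` lies in `p^(r-1) R`, and this ideal squares to zero because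
`2(r-1) ≥ r`. Hence `1 + x y` is a unit and `(1 + x₁ y)(1 + x₂ y) = 1 + (x₁ + x₂) y`.
Lifting `y = p^i c` to `O`, the condition `y ∉ p^(i+1) R` forces the lift of `c` out of the
maximal ideal `(π)`, so `y = p^i v` with `v` a unit; then `1 + d p^(r-1) = 1 + (d v⁻¹ p^(r-i-1)) y`
gives surjectivity.
-/

open Ideal

section SpanPow

variable {R : Type*} [CommRing R]

lemma mul_mem_span_pow_add {p x y : R} {a b : ℕ} (hx : x ∈ span {p ^ a})
    (hy : y ∈ span {p ^ b}) : x * y ∈ span {p ^ (a + b)} := by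
  rw [pow_add, ← span_singleton_mul_span_singleton]
  exact mul_mem_mul hx hy

lemma mul_eq_zero_of_mem_span_pow {p z₁ z₂ : R} {r k : ℕ} (hp : p ^ r = 0) (hk : r ≤ 2 * k)
    (h₁ : z₁ ∈ span {p ^ k}) (h₂ : z₂ ∈ span {p ^ k}) : z₁ * z₂ = 0 := by
  obtain ⟨c₁, rfl⟩ := mem_span_singleton'.mp h₁
  obtain ⟨c₂, rfl⟩ := mem_span_singleton'.mp h₂
  have hpk : p ^ k * p ^ k = 0 := by
    rw [← pow_add]
    exact pow_eq_zero_of_le (by omega) hp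
  linear_combination c₁ * c₂ * hpk

lemma exists_mem_span_pow_eq_one_add_mul {p u : R} {a i : ℕ} (v : Rˣ)
    (hu : u - 1 ∈ span {p ^ (a + i)}) : ∃ x ∈ span {p ^ a}, u = 1 + x * (p ^ i * v) := by
  obtain ⟨c, hc⟩ := mem_span_singleton'.mp hu
  refine ⟨c * ↑v⁻¹ * p ^ a, mem_span_singleton'.mpr ⟨_, rfl⟩, ?_⟩
  linear_combination -hc - c * p ^ (a + i) * v.inv_mul + c * p ^ i * p ^ a * (pow_add p a i)

end SpanPow

lemma exists_unit_mul_of_mem_span_pow_of_notMem {O R : Type*} [CommRing O] [IsLocalRing O]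
    [CommRing R] {f : O →+* R} (hf : Function.Surjective f) {π : O}
    (hπ : IsLocalRing.maximalIdeal O = span {π}) {y : R} {i : ℕ}
    (hy : y ∈ span {f π ^ i}) (hy' : y ∉ span {f π ^ (i + 1)}) : ∃ v : Rˣ, y = f π ^ i * v := by
  obtain ⟨c, rfl⟩ := mem_span_singleton'.mp hy
  obtain ⟨c, rfl⟩ := hf c
  have hc : IsUnit c := by
    by_contra hc
    have hcπ : c ∈ span {π} := hπ ▸ (IsLocalRing.mem_maximalIdeal c).mpr hc
    obtain ⟨d, rfl⟩ := mem_span_singleton'.mp hcπ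
    exact hy' (mem_span_singleton'.mpr ⟨f d, by rw [map_mul, pow_succ]; ring⟩)
  exact ⟨(hc.map f).unit, by rw [IsUnit.unit_spec, mul_comm]⟩

/-- For a DVR `O` with uniformizer `π`, `r ≥ 2`, `R = O/(π^r)`,
`0 ≤ i ≤ r−2`, and `y ∈ π^i R \ π^(i+1) R`, the map `x ↦ 1 + x·y` is a
surjective group homomorphism from the additive group `π^(r−i−1)R` onto the
multiplicative group `1 + π^(r−1)R`: its values are units, it sends sums to
products, and it is surjective. -/
theorem stmt9 {O : Type*} [CommRing O] [IsDomain O] [IsDiscreteValuationRing O]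
    (π : O) (hπ : Irreducible π) (r i : ℕ) (hr : 2 ≤ r) (hi : i ≤ r - 2)
    (y : O ⧸ Ideal.span {π ^ r})
    (hy : y ∈ Ideal.span {(Ideal.Quotient.mk (Ideal.span {π ^ r}) π) ^ i})
    (hy' : y ∉ Ideal.span {(Ideal.Quotient.mk (Ideal.span {π ^ r}) π) ^ (i + 1)}) :
    (∀ x ∈ Ideal.span {(Ideal.Quotient.mk (Ideal.span {π ^ r}) π) ^ (r - i - 1)},
        IsUnit (1 + x * y)) ∧
    (∀ x₁ ∈ Ideal.span {(Ideal.Quotient.mk (Ideal.span {π ^ r}) π) ^ (r - i - 1)},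
      ∀ x₂ ∈ Ideal.span {(Ideal.Quotient.mk (Ideal.span {π ^ r}) π) ^ (r - i - 1)},
        1 + (x₁ + x₂) * y = (1 + x₁ * y) * (1 + x₂ * y)) ∧
    (∀ u : O ⧸ Ideal.span {π ^ r},
        u - 1 ∈ Ideal.span {(Ideal.Quotient.mk (Ideal.span {π ^ r}) π) ^ (r - 1)} →
        ∃ x ∈ Ideal.span {(Ideal.Quotient.mk (Ideal.span {π ^ r}) π) ^ (r - i - 1)},
          u = 1 + x * y) := by
  set p := Ideal.Quotient.mk (Ideal.span {π ^ r}) π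
  have hp : p ^ r = 0 := by
    rw [← map_pow, Ideal.Quotient.eq_zero_iff_mem]
    exact mem_span_singleton_self _
  have hexp : r - i - 1 + i = r - 1 := by omega
  have hxy : ∀ x ∈ span {p ^ (r - i - 1)}, x * y ∈ span {p ^ (r - 1)} := fun x hx =>
    hexp ▸ mul_mem_span_pow_add hx hy
  have hsq : ∀ x₁ ∈ span {p ^ (r - i - 1)}, ∀ x₂ ∈ span {p ^ (r - i - 1)},
      x₁ * y * (x₂ * y) = 0 := fun x₁ h₁ x₂ h₂ =>
    mul_eq_zero_of_mem_span_pow hp (by omega) (hxy x₁ h₁) (hxy x₂ h₂)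
  refine ⟨fun x hx => IsNilpotent.isUnit_one_add ⟨2, by rw [sq]; exact hsq x hx x hx⟩,
    fun x₁ h₁ x₂ h₂ => by linear_combination -hsq x₁ h₁ x₂ h₂, fun u hu => ?_⟩
  obtain ⟨v, rfl⟩ := exists_unit_mul_of_mem_span_pow_of_notMem Ideal.Quotient.mk_surjective
    hπ.maximalIdeal_eq hy hy'
  exact exists_mem_span_pow_eq_one_add_mul v (hexp.symm ▸ hu)
end

section
/- Let O be a discrete valuation ring with uniformizer π, r ≥ 1, R = O/(π^r), and fix b ∈ {0, 1, …, r}. In GLₙ(R), let U(m) denote the group of upper-triangular unipotent matrices congruent to 1 mod π^m, and let U⁻(m) denote the group of lower-triangular unipotent matrices congruent to 1 mod π^m. Then the product set U(r−b) · U⁻(b) is closed under taking inverses, i.e., if g ∈ U(r−b)·U⁻(b) then g⁻¹ ∈ U⁻(b)·U(r−b), and moreover U(r−b)·U⁻(b) = U⁻(b)·U(r−b); consequently U(r−b)·U⁻(b) is a subgroup of GLₙ(R). -/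
/-!
Since `p ^ (r - b) * p ^ b = 0` in `O ⧸ (π ^ r)`, every element of `U(r - b)` commutes with every
element of `U⁻(b)`: writing `u = 1 + A` and `v = 1 + B`, both `A * B` and `B * A` have entries in
`(p ^ (r - b)) * (p ^ b) = 0`. The product set of two elementwise commuting subgroups is their join,
which gives all three claims at once. That `U(m)` and `U⁻(m)` are subgroups comes from writing each
as unitriangular matrices intersected with the kernel of reduction modulo `p ^ m`.
-/

open Matrix

/-- Upper-triangular unipotent matrices in `GLₙ(R)` congruent to `1` modulo the
ideal generated by `p^m` (in the application, `p` is the image of the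
uniformizer `π` in `R = O/(π^r)`). -/
def IsUpperUnipMod {R : Type*} [CommRing R] {n : ℕ} (p : R) (m : ℕ)
    (g : GL (Fin n) R) : Prop :=
  (∀ k, (g : Matrix (Fin n) (Fin n) R) k k = 1) ∧
  (∀ k l : Fin n, l < k → (g : Matrix (Fin n) (Fin n) R) k l = 0) ∧
  (∀ k l : Fin n, k < l → (g : Matrix (Fin n) (Fin n) R) k l ∈ Ideal.span {p ^ m})

/-- Lower-triangular unipotent matrices in `GLₙ(R)` congruent to `1` modulo
`p^m`. -/
def IsLowerUnipMod {R : Type*} [CommRing R] {n : ℕ} (p : R) (m : ℕ)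
    (g : GL (Fin n) R) : Prop :=
  (∀ k, (g : Matrix (Fin n) (Fin n) R) k k = 1) ∧
  (∀ k l : Fin n, k < l → (g : Matrix (Fin n) (Fin n) R) k l = 0) ∧
  (∀ k l : Fin n, l < k → (g : Matrix (Fin n) (Fin n) R) k l ∈ Ideal.span {p ^ m})

open Function
open scoped Pointwise

namespace Subgroup

variable {G : Type*} [Group G] {H K : Subgroup G}

theorem setOf_exists_eq_mul (H K : Subgroup G) :
    {g | ∃ u v, u ∈ H ∧ v ∈ K ∧ g = u * v} = (H : Set G) * (K : Set G) := by
  ext g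
  simp only [Set.mem_ofPred_eq, Set.mem_mul, SetLike.mem_coe, exists_and_left, eq_comm]

theorem coe_mul_comm_of_le_centralizer (hHK : H ≤ centralizer K) :
    (H : Set G) * (K : Set G) = (K : Set G) * (H : Set G) := by
  ext g
  constructor
  · rintro ⟨x, hx, y, hy, rfl⟩
    exact ⟨y, hy, x, hx, mem_centralizer_iff.mp (hHK hx) y hy⟩
  · rintro ⟨y, hy, x, hx, rfl⟩
    exact ⟨x, hx, y, hy, (mem_centralizer_iff.mp (hHK hx) y hy).symm⟩

theorem coe_sup_of_le_centralizer (hHK : H ≤ centralizer K) :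
    ((H ⊔ K : Subgroup G) : Set G) = (H : Set G) * (K : Set G) :=
  coe_mul_of_left_le_normalizer_right H K (hHK.trans (centralizer_le_normalizer (K : Set G)))

theorem inv_mem_coe_mul_swap {g : G} (hg : g ∈ (H : Set G) * (K : Set G)) :
    g⁻¹ ∈ (K : Set G) * (H : Set G) := by
  obtain ⟨x, hx, y, hy, rfl⟩ := hg
  exact ⟨y⁻¹, K.inv_mem hy, x⁻¹, H.inv_mem hx, (mul_inv_rev x y).symm⟩

end Subgroup

namespace Matrix

variable {ι α R : Type*} [Fintype ι] [CommRing R] [LinearOrder α]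

theorem BlockTriangular.mul_apply_self {M N : Matrix ι ι R} {b : ι → α} (hb : Injective b)
    (hM : M.BlockTriangular b) (hN : N.BlockTriangular b) (i : ι) :
    (M * N) i i = M i i * N i i := by
  rw [mul_apply]
  refine Finset.sum_eq_single i (fun j _ hji => ?_) (by simp)
  rcases lt_or_gt_of_ne (hb.ne hji) with h | h
  · rw [hM h, zero_mul]
  · rw [hN h, mul_zero]

theorem mul_eq_zero_of_forall_mem {I J : Ideal R} (hIJ : I * J = ⊥) {A B : Matrix ι ι R}
    (hA : ∀ i j, A i j ∈ I) (hB : ∀ i j, B i j ∈ J) : A * B = 0 := by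
  ext i j
  rw [zero_apply, ← Ideal.mem_bot, ← hIJ, mul_apply]
  exact Ideal.sum_mem _ fun k _ => Ideal.mul_mem_mul (hA i k) (hB k j)

namespace GeneralLinearGroup

variable [DecidableEq ι]

def unitriangular (b : ι → α) (hb : Injective b) : Subgroup (GL ι R) where
  carrier := {g | (g : Matrix ι ι R).BlockTriangular b ∧ ∀ i, (g : Matrix ι ι R) i i = 1}
  one_mem' := ⟨blockTriangular_one, fun i => one_apply_eq i⟩
  mul_mem' := fun {g h} ⟨hg, hg1⟩ ⟨hh, hh1⟩ =>
    ⟨hg.mul hh, fun i => by rw [Units.val_mul, hg.mul_apply_self hb hh, hg1, hh1, one_mul]⟩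
  inv_mem' := fun {g} ⟨hg, hg1⟩ => by
    have hinv : BlockTriangular (↑g⁻¹ : Matrix ι ι R) b := by
      rw [coe_units_inv]
      exact blockTriangular_inv_of_blockTriangular hg
    refine ⟨hinv, fun i => ?_⟩
    have h1 : ((g⁻¹ : GL ι R) : Matrix ι ι R) * g = 1 := by
      rw [← Units.val_mul, inv_mul_cancel, Units.val_one]
    have := congrFun (congrFun h1 i) i
    rwa [hinv.mul_apply_self hb hg, hg1, mul_one, one_apply_eq] at this

def congruenceKernel (I : Ideal R) : Subgroup (GL ι R) :=
  (map (Ideal.Quotient.mk I)).ker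

theorem mem_congruenceKernel {I : Ideal R} {g : GL ι R} :
    g ∈ congruenceKernel I ↔ ∀ i j, ((g : Matrix ι ι R) - 1) i j ∈ I := by
  rw [congruenceKernel, MonoidHom.mem_ker, ← (map (Ideal.Quotient.mk I)).map_one, Units.ext_iff,
    ← Matrix.ext_iff]
  simp only [GeneralLinearGroup.map_apply, sub_apply, Ideal.Quotient.eq, Units.val_one]

theorem commute_of_mem_congruenceKernel {I J : Ideal R} (hIJ : I * J = ⊥) {g h : GL ι R}
    (hg : g ∈ congruenceKernel I) (hh : h ∈ congruenceKernel J) : Commute g h := by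
  rw [mem_congruenceKernel] at hg hh
  have hgh := mul_eq_zero_of_forall_mem hIJ hg hh
  have hhg := mul_eq_zero_of_forall_mem ((mul_comm J I).trans hIJ) hh hg
  refine Units.ext (sub_eq_zero.mp ?_)
  calc (g * h : Matrix ι ι R) - h * g
      = ((g : Matrix ι ι R) - 1) * (h - 1) - (h - 1) * (g - 1) := by noncomm_ring
    _ = 0 := by rw [hgh, hhg, sub_zero]

theorem congruenceKernel_le_centralizer {I J : Ideal R} (hIJ : I * J = ⊥) :
    congruenceKernel I ≤ Subgroup.centralizer (congruenceKernel (ι := ι) J : Set (GL ι R)) :=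
  fun _ hg => Subgroup.mem_centralizer_iff.mpr fun _ hh =>
    (commute_of_mem_congruenceKernel hIJ hg hh).symm.eq

theorem mem_unitriangular_inf_congruenceKernel {b : ι → α} (hb : Injective b) {I : Ideal R}
    {g : GL ι R} :
    g ∈ unitriangular b hb ⊓ congruenceKernel I ↔
      (∀ i, (g : Matrix ι ι R) i i = 1) ∧ (∀ i j, b j < b i → (g : Matrix ι ι R) i j = 0) ∧
        ∀ i j, b i < b j → (g : Matrix ι ι R) i j ∈ I := by
  rw [Subgroup.mem_inf, mem_congruenceKernel]
  constructor
  · rintro ⟨⟨htri, hdiag⟩, hI⟩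
    refine ⟨hdiag, fun i j hij => htri hij, fun i j hij => ?_⟩
    simpa [one_apply_ne (hb.ne_iff.mp hij.ne)] using hI i j
  · rintro ⟨hdiag, htri, hI⟩
    refine ⟨⟨fun i j hij => htri i j hij, hdiag⟩, fun i j => ?_⟩
    rcases lt_trichotomy (b i) (b j) with hij | hij | hij
    · simpa [one_apply_ne (hb.ne_iff.mp hij.ne)] using hI i j hij
    · simp [hb hij, hdiag]
    · simp [htri i j hij, one_apply_ne (hb.ne_iff.mp hij.ne')]

end GeneralLinearGroup

end Matrix

section UnipMod

open Matrix.GeneralLinearGroup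

variable {R : Type*} [CommRing R] {n : ℕ}

def upperUnipModSubgroup (p : R) (m : ℕ) : Subgroup (GL (Fin n) R) :=
  unitriangular id injective_id ⊓ congruenceKernel (Ideal.span {p ^ m})

def lowerUnipModSubgroup (p : R) (m : ℕ) : Subgroup (GL (Fin n) R) :=
  unitriangular OrderDual.toDual OrderDual.toDual.injective ⊓
    congruenceKernel (Ideal.span {p ^ m})

theorem mem_upperUnipModSubgroup {p : R} {m : ℕ} {g : GL (Fin n) R} :
    g ∈ upperUnipModSubgroup p m ↔ IsUpperUnipMod p m g :=
  mem_unitriangular_inf_congruenceKernel injective_id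

theorem mem_lowerUnipModSubgroup {p : R} {m : ℕ} {g : GL (Fin n) R} :
    g ∈ lowerUnipModSubgroup p m ↔ IsLowerUnipMod p m g :=
  mem_unitriangular_inf_congruenceKernel OrderDual.toDual.injective

theorem upperUnipModSubgroup_le_centralizer {p : R} {a c : ℕ} (hp : p ^ a * p ^ c = 0) :
    upperUnipModSubgroup p a ≤
      Subgroup.centralizer (lowerUnipModSubgroup (n := n) p c : Set (GL (Fin n) R)) := by
  have hIJ : Ideal.span {p ^ a} * Ideal.span {p ^ c} = ⊥ := by
    rw [Ideal.span_singleton_mul_span_singleton, hp, Ideal.span_singleton_eq_bot]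
  exact inf_le_right.trans <| (congruenceKernel_le_centralizer hIJ).trans <|
    Subgroup.centralizer_le inf_le_right

end UnipMod

theorem stmt16_general {O : Type*} [CommRing O]
    (π : O) (r b n : ℕ) (hb : b ≤ r) :
    letI R := O ⧸ Ideal.span {π ^ r}
    letI p : R := Ideal.Quotient.mk (Ideal.span {π ^ r}) π
    letI UL : Set (GL (Fin n) R) :=
      {g | ∃ u v, IsUpperUnipMod p (r - b) u ∧ IsLowerUnipMod p b v ∧ g = u * v}
    letI LU : Set (GL (Fin n) R) :=
      {g | ∃ v u, IsLowerUnipMod p b v ∧ IsUpperUnipMod p (r - b) u ∧ g = v * u}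
    (∀ g ∈ UL, g⁻¹ ∈ LU) ∧ UL = LU ∧
      ∃ H : Subgroup (GL (Fin n) R), (H : Set (GL (Fin n) R)) = UL := by
  set p := Ideal.Quotient.mk (Ideal.span {π ^ r}) π
  have hp : p ^ (r - b) * p ^ b = 0 := by
    rw [← pow_add, Nat.sub_add_cancel hb, ← map_pow, Ideal.Quotient.eq_zero_iff_mem]
    exact Ideal.mem_span_singleton_self _
  have hcomm := upperUnipModSubgroup_le_centralizer (n := n) hp
  simp only [← mem_upperUnipModSubgroup (n := n), ← mem_lowerUnipModSubgroup (n := n),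
    Subgroup.setOf_exists_eq_mul]
  exact ⟨fun g => Subgroup.inv_mem_coe_mul_swap, Subgroup.coe_mul_comm_of_le_centralizer hcomm,
    _, Subgroup.coe_sup_of_le_centralizer hcomm⟩

/-- In `GLₙ(O/π^r)`, the product set `U(r−b)·U⁻(b)` is closed under inverses
(with inverse lying in `U⁻(b)·U(r−b)`), equals `U⁻(b)·U(r−b)`, and is a
subgroup. This is the group `U^{r−b,b}` underlying the Deligne–Lusztig
varieties at page `b`. -/
theorem stmt16 {O : Type*} [CommRing O] [IsDomain O] [IsDiscreteValuationRing O]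
    (π : O) (hπ : Irreducible π) (r b n : ℕ) (hr : 1 ≤ r) (hb : b ≤ r) :
    letI R := O ⧸ Ideal.span {π ^ r}
    letI p : R := Ideal.Quotient.mk (Ideal.span {π ^ r}) π
    letI UL : Set (GL (Fin n) R) :=
      {g | ∃ u v, IsUpperUnipMod p (r - b) u ∧ IsLowerUnipMod p b v ∧ g = u * v}
    letI LU : Set (GL (Fin n) R) :=
      {g | ∃ v u, IsLowerUnipMod p b v ∧ IsUpperUnipMod p (r - b) u ∧ g = v * u}
    (∀ g ∈ UL, g⁻¹ ∈ LU) ∧ UL = LU ∧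
      ∃ H : Subgroup (GL (Fin n) R), (H : Set (GL (Fin n) R)) = UL :=
  stmt16_general π r b n hb
end

section
/- Let G be a group, σ : G → G an endomorphism with surjective Lang map L(g) = g⁻¹σ(g), and suppose the fixed-point set Gᵟ = {g : σ(g) = g} is finite. Then for any finite subsets X, X' ⊆ G such that L⁻¹(X) and L⁻¹(X') are finite, the cardinality identity |L⁻¹(X)| · |L⁻¹(X')| = |Gᵟ| · |{(x, x', y) ∈ X × X' × G : x·σ(y) = y·x'}| holds. -/
/-!
Write `L g = g⁻¹ σ(g)` and fix a section `s` of the surjective map `L`. Left multiplication by a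
`σ`-fixed element does not change `L`, and `L (a y) = y⁻¹ (L a) σ(y)`, so the condition
`x σ(y) = y x'` says exactly that `x' = L (a y)` whenever `x = L a`. Hence
`(g, (x, x', y)) ↦ (g s(x), g s(x) y)` is a bijection `Gᵟ × S ≃ L⁻¹(X) × L⁻¹(X')`, with inverse
`(a, b) ↦ (a s(L a)⁻¹, (L a, L b, a⁻¹ b))`, and the identity is its cardinality shadow.
-/

namespace MonoidHom

variable {G : Type*} [Group G] (σ : G →* G)

def lang (g : G) : G := g⁻¹ * σ g

theorem lang_mul (a y : G) : σ.lang (a * y) = y⁻¹ * σ.lang a * σ y := by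
  simp only [lang, map_mul]; group

theorem lang_fixed_mul {g : G} (hg : σ g = g) (a : G) : σ.lang (g * a) = σ.lang a := by
  simp only [lang, map_mul, hg]; group

theorem map_mul_inv_eq_of_lang_eq {a b : G} (h : σ.lang a = σ.lang b) :
    σ (a * b⁻¹) = a * b⁻¹ := by
  have hσa : σ a = a * σ.lang b := by rw [← h, lang]; group
  rw [map_mul, map_inv, hσa, lang]
  group

theorem lang_mul_map (a y : G) : σ.lang a * σ y = y * σ.lang (a * y) := by
  rw [lang_mul]; group

theorem lang_eq_of_mul_map_eq {a y x' : G} (h : σ.lang a * σ y = y * x') :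
    σ.lang (a * y) = x' := by
  rw [lang_mul, mul_assoc, h]; group

variable {σ}

noncomputable def fixedPointsProdEquiv (hL : Function.Surjective σ.lang) (X X' : Set G) :
    {g | σ g = g} × {p : G × G × G | p.1 ∈ X ∧ p.2.1 ∈ X' ∧ p.1 * σ p.2.2 = p.2.2 * p.2.1} ≃
      {a | σ.lang a ∈ X} × {b | σ.lang b ∈ X'} where
  toFun gp :=
    have ha : σ.lang (gp.1.1 * Function.surjInv hL gp.2.1.1) = gp.2.1.1 := by
      rw [lang_fixed_mul σ gp.1.2, Function.surjInv_eq hL]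
    (⟨_, ha ▸ gp.2.2.1⟩,
      ⟨_, (lang_eq_of_mul_map_eq σ (ha ▸ gp.2.2.2.2)) ▸ gp.2.2.2.1⟩)
  invFun ab :=
    (⟨ab.1.1 * (Function.surjInv hL (σ.lang ab.1.1))⁻¹,
        map_mul_inv_eq_of_lang_eq σ (Function.surjInv_eq hL _).symm⟩,
      ⟨(σ.lang ab.1.1, σ.lang ab.2.1, ab.1.1⁻¹ * ab.2.1), ab.1.2, ab.2.2, by
        simp only [lang_mul_map, mul_inv_cancel_left]⟩)
  left_inv := by
    rintro ⟨⟨g, hg⟩, ⟨⟨x, x', y⟩, -, -, hxy⟩⟩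
    have ha : σ.lang (g * Function.surjInv hL x) = x := by
      rw [lang_fixed_mul σ hg, Function.surjInv_eq hL]
    have hb : σ.lang (g * Function.surjInv hL x * y) = x' :=
      lang_eq_of_mul_map_eq σ (by rwa [ha])
    ext
    · simp [ha]
    · exact ha
    · exact hb
    · exact inv_mul_cancel_left _ _
  right_inv := by
    intro ab
    ext <;> simp

end MonoidHom

theorem stmt18_general {G : Type*} [Group G] (σ : G →* G)
    (hL : Function.Surjective (fun g : G => g⁻¹ * σ g))
    (X X' : Set G) :
    Nat.card {g : G | g⁻¹ * σ g ∈ X} * Nat.card {g : G | g⁻¹ * σ g ∈ X'}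
      = Nat.card {g : G | σ g = g} *
        Nat.card {p : G × G × G |
          p.1 ∈ X ∧ p.2.1 ∈ X' ∧ p.1 * σ p.2.2 = p.2.2 * p.2.1} := by
  rw [← Nat.card_prod, ← Nat.card_prod]
  exact (Nat.card_congr (MonoidHom.fixedPointsProdEquiv hL X X')).symm

/-- Counting consequence of the Lang-map bijection:
`|L⁻¹(X)|·|L⁻¹(X')| = |Gᵟ|·|{(x, x', y) : x·σ(y) = y·x'}|`. -/
theorem stmt18 {G : Type*} [Group G] (σ : G →* G)
    (hL : Function.Surjective (fun g : G => g⁻¹ * σ g))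
    (hfix : Set.Finite {g : G | σ g = g})
    (X X' : Set G) (hX : X.Finite) (hX' : X'.Finite)
    (h1 : Set.Finite {g : G | g⁻¹ * σ g ∈ X})
    (h2 : Set.Finite {g : G | g⁻¹ * σ g ∈ X'}) :
    Nat.card {g : G | g⁻¹ * σ g ∈ X} * Nat.card {g : G | g⁻¹ * σ g ∈ X'}
      = Nat.card {g : G | σ g = g} *
        Nat.card {p : G × G × G |
          p.1 ∈ X ∧ p.2.1 ∈ X' ∧ p.1 * σ p.2.2 = p.2.2 * p.2.1} :=
  stmt18_general σ hL X X'
end
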